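/- arXiv:1805.00216 — 4 statements merged into one kernel-verified Lean document; each statement's English description precedes it below -/
import Mathlib

section
/- If a mechanism M satisfies (ε,0)-differential privacy, then M satisfies (ε²/2)-zCDP. -/
/-! The likelihood ratio `p / q` of an `ε`-DP pair lies in `[e^{-ε}, e^ε]`, where the convex
function `r ↦ r ^ a` lies below its chord; summing against `q` bounds the Rényi sum
`∑ p ^ a q ^ (1 - a)` by its value for randomized response, `cosh (ε (a - 1/2)) / cosh (ε / 2)`.
As `x ↦ x ^ 2 / 2 - log (cosh x)` is monotone on `[0, ∞)` (because `tanh x ≤ x`), the logarithm of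
this ratio is at most `ε ^ 2 a (a - 1) / 2`. -/

/-- The `α`-Rényi divergence between two (discrete) distributions given by
mass functions `p q`. -/
noncomputable def renyiDiv {Ω : Type*} (a : ℝ) (p q : Ω → ℝ) : ℝ :=
  (a - 1)⁻¹ * Real.log (∑' x, p x ^ a * q x ^ (1 - a))

/-- `ρ`-zero-concentrated differential privacy. -/
def zCDP {D Ω : Type*} (Neighbor : D → D → Prop) (ρ : ℝ) (M : D → Ω → ℝ) : Prop :=
  ∀ X X', Neighbor X X' → ∀ a : ℝ, 1 < a → renyiDiv a (M X) (M X') ≤ ρ * a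

open Real Set

lemma sinh_le_mul_cosh {x : ℝ} (hx : 0 ≤ x) : sinh x ≤ x * cosh x := by
  have hmono : MonotoneOn (fun t => t * cosh t - sinh t) (Ici 0) := by
    refine monotoneOn_of_hasDerivWithinAt_nonneg (f' := fun t => t * sinh t) (convex_Ici 0)
      (by fun_prop) (fun t _ => ?_) (fun t ht => ?_)
    · exact ((((hasDerivAt_id' t).mul (hasDerivAt_cosh t)).sub
        (hasDerivAt_sinh t)).congr_deriv (by ring)).hasDerivWithinAt
    · rw [interior_Ici, mem_Ioi] at ht
      exact mul_nonneg ht.le (sinh_nonneg_iff.mpr ht.le)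
  simpa using hmono self_mem_Ici hx hx

lemma monotoneOn_sq_div_two_sub_log_cosh :
    MonotoneOn (fun x : ℝ => x ^ 2 / 2 - log (cosh x)) (Ici 0) := by
  refine monotoneOn_of_hasDerivWithinAt_nonneg (f' := fun x => x - sinh x / cosh x)
    (convex_Ici 0) ?_ (fun x _ => ?_) (fun x hx => ?_)
  · exact ((continuous_pow 2).div_const 2).continuousOn.sub
      (continuous_cosh.continuousOn.log fun x _ => (cosh_pos x).ne')
  · exact ((((hasDerivAt_pow 2 x).div_const 2).sub
      ((hasDerivAt_cosh x).log (cosh_pos x).ne')).congr_deriv (by norm_num)).hasDerivWithinAt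
  · rw [interior_Ici, mem_Ioi] at hx
    rw [sub_nonneg, div_le_iff₀ (cosh_pos x)]
    exact sinh_le_mul_cosh hx.le

lemma log_cosh_sub_log_cosh_le {x y : ℝ} (hy : 0 ≤ y) (hyx : y ≤ x) :
    log (cosh x) - log (cosh y) ≤ (x ^ 2 - y ^ 2) / 2 := by
  have := monotoneOn_sq_div_two_sub_log_cosh hy (hy.trans hyx) hyx
  simp only at this
  linarith

lemma ConvexOn.le_chord {s : Set ℝ} {f : ℝ → ℝ} (hf : ConvexOn ℝ s f) {x y z : ℝ}
    (hx : x ∈ s) (hz : z ∈ s) (hxy : x ≤ y) (hyz : y ≤ z) (hxz : x < z) :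
    f y ≤ ((z - y) * f x + (y - x) * f z) / (z - x) := by
  have hxz' : 0 < z - x := sub_pos.2 hxz
  have key := hf.2 hx hz (div_nonneg (sub_nonneg.2 hyz) hxz'.le)
    (div_nonneg (sub_nonneg.2 hxy) hxz'.le) (by rw [← add_div, div_eq_one_iff_eq hxz'.ne']; ring)
  have hy : ((z - y) / (z - x)) • x + ((y - x) / (z - x)) • z = y := by
    simp only [smul_eq_mul]; field_simp; ring
  rw [hy, smul_eq_mul, smul_eq_mul] at key
  calc f y ≤ _ := key
    _ = _ := by field_simp

lemma rpow_mul_rpow_one_sub_le {a l u p q : ℝ} (ha : 1 ≤ a) (hl : 0 ≤ l) (hlu : l < u)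
    (hq : 0 ≤ q) (hlp : l * q ≤ p) (hpu : p ≤ u * q) :
    p ^ a * q ^ (1 - a) ≤
      (u ^ a - l ^ a) / (u - l) * p + (u * l ^ a - l * u ^ a) / (u - l) * q := by
  rcases hq.eq_or_lt with rfl | hq
  · obtain rfl : p = 0 := by linarith
    simp [zero_rpow (by positivity : a ≠ 0)]
  set r := p / q
  have hr : r ∈ Icc l u := ⟨(le_div_iff₀ hq).2 hlp, (div_le_iff₀ hq).2 hpu⟩
  have hchord := (convexOn_rpow ha).le_chord (mem_Ici.2 hl) (mem_Ici.2 (hl.trans hlu.le))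
    hr.1 hr.2 hlu
  have hp : p = r * q := (div_mul_cancel₀ p hq.ne').symm
  have hlhs : p ^ a * q ^ (1 - a) = r ^ a * q := by
    rw [hp, mul_rpow (hl.trans hr.1) hq.le, mul_assoc, ← rpow_add hq]
    norm_num
  rw [hlhs, hp]
  calc r ^ a * q ≤ ((u - r) * l ^ a + (r - l) * u ^ a) / (u - l) * q :=
        mul_le_mul_of_nonneg_right hchord hq.le
    _ = _ := by ring

lemma tsum_le_mul_tsum_add_mul_tsum {Ω : Type*} {f p q : Ω → ℝ} {A B : ℝ} (hf : ∀ y, 0 ≤ f y)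
    (hp : Summable p) (hq : Summable q) (h : ∀ y, f y ≤ A * p y + B * q y) :
    ∑' y, f y ≤ A * ∑' y, p y + B * ∑' y, q y := by
  have hg : Summable fun y => A * p y + B * q y := (hp.mul_left A).add (hq.mul_left B)
  calc ∑' y, f y ≤ ∑' y, (A * p y + B * q y) := (hg.of_nonneg_of_le hf h).tsum_le_tsum h hg
    _ = _ := by rw [(hp.mul_left A).tsum_add (hq.mul_left B), tsum_mul_left, tsum_mul_left]

lemma summable_of_tsum_eq_one {Ω : Type*} {f : Ω → ℝ} (h : ∑' y, f y = 1) : Summable f := by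
  by_contra hf
  simp [tsum_eq_zero_of_not_summable hf] at h

lemma exp_chord_coeff_add_eq {ε : ℝ} (hε : 0 < ε) (a : ℝ) :
    (exp ε ^ a - exp (-ε) ^ a) / (exp ε - exp (-ε)) +
      (exp ε * exp (-ε) ^ a - exp (-ε) * exp ε ^ a) / (exp ε - exp (-ε)) =
      cosh (ε * (a - 1 / 2)) / cosh (ε / 2) := by
  have e1 : exp ε = exp (ε / 2) * exp (ε / 2) := by rw [← exp_add]; ring_nf
  have e2 : exp ε ^ a = exp (ε * (a - 1 / 2)) * exp (ε / 2) := by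
    rw [← exp_mul, ← exp_add]; ring_nf
  have e3 : exp (-ε) ^ a = (exp (ε * (a - 1 / 2)) * exp (ε / 2))⁻¹ := by
    rw [← exp_mul, ← exp_add, ← exp_neg]; ring_nf
  rw [cosh_eq, cosh_eq, e2, e3, exp_neg ε, e1, exp_neg, exp_neg]
  set x := exp (ε / 2)
  have hx : 1 < x := one_lt_exp_iff.2 (by positivity)
  have hxx : 1 < x * x := one_lt_mul hx.le hx
  have hden : x * x - (x * x)⁻¹ ≠ 0 := (sub_pos.2 ((inv_lt_one_of_one_lt₀ hxx).trans hxx)).ne'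
  rw [← add_div, div_eq_div_iff hden (by positivity)]
  field_simp
  ring

lemma tsum_rpow_mul_rpow_one_sub_le {Ω : Type*} {p q : Ω → ℝ} {ε a : ℝ} (hε : 0 ≤ ε) (ha : 1 ≤ a)
    (hp0 : ∀ y, 0 ≤ p y) (hq0 : ∀ y, 0 ≤ q y) (hp1 : ∑' y, p y = 1) (hq1 : ∑' y, q y = 1)
    (hpq : ∀ y, p y ≤ exp ε * q y) (hqp : ∀ y, q y ≤ exp ε * p y) :
    ∑' y, p y ^ a * q y ^ (1 - a) ≤ cosh (ε * (a - 1 / 2)) / cosh (ε / 2) := by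
  rcases hε.eq_or_lt with rfl | hε
  · have hpq : p = q := funext fun y => by
      simp only [exp_zero, one_mul] at hpq hqp
      exact (hpq y).antisymm (hqp y)
    have hterm : ∀ y, q y ^ a * q y ^ (1 - a) = q y := fun y => by
      rw [← rpow_add' (hq0 y) (by norm_num), add_sub_cancel, rpow_one]
    simp [hpq, hterm, hq1]
  have hqp' : ∀ y, exp (-ε) * q y ≤ p y := fun y => by
    rw [exp_neg, inv_mul_le_iff₀ (exp_pos ε)]
    exact hqp y
  have hsum := tsum_le_mul_tsum_add_mul_tsum
    (fun y => mul_nonneg (rpow_nonneg (hp0 y) a) (rpow_nonneg (hq0 y) (1 - a)))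
    (summable_of_tsum_eq_one hp1) (summable_of_tsum_eq_one hq1) fun y =>
      rpow_mul_rpow_one_sub_le ha (exp_pos _).le (exp_lt_exp.2 (neg_lt_self hε)) (hq0 y)
        (hqp' y) (hpq y)
  rwa [hp1, hq1, mul_one, mul_one, exp_chord_coeff_add_eq hε] at hsum

lemma renyiDiv_le_of_le_exp_mul {Ω : Type*} {p q : Ω → ℝ} {ε a : ℝ} (hε : 0 ≤ ε) (ha : 1 < a)
    (hp0 : ∀ y, 0 ≤ p y) (hq0 : ∀ y, 0 ≤ q y) (hp1 : ∑' y, p y = 1) (hq1 : ∑' y, q y = 1)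
    (hpq : ∀ y, p y ≤ exp ε * q y) (hqp : ∀ y, q y ≤ exp ε * p y) :
    renyiDiv a p q ≤ ε ^ 2 / 2 * a := by
  have hS := tsum_rpow_mul_rpow_one_sub_le hε ha.le hp0 hq0 hp1 hq1 hpq hqp
  have hS0 : 0 ≤ ∑' y, p y ^ a * q y ^ (1 - a) :=
    tsum_nonneg fun y => mul_nonneg (rpow_nonneg (hp0 y) a) (rpow_nonneg (hq0 y) (1 - a))
  have hlog : log (∑' y, p y ^ a * q y ^ (1 - a)) ≤ (a - 1) * (ε ^ 2 / 2 * a) := by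
    rcases hS0.eq_or_lt with h | h
    · rw [← h, log_zero]
      have : 0 ≤ a - 1 := by linarith
      positivity
    calc log (∑' y, p y ^ a * q y ^ (1 - a))
        ≤ log (cosh (ε * (a - 1 / 2))) - log (cosh (ε / 2)) := by
          rw [← log_div (cosh_pos _).ne' (cosh_pos _).ne']
          exact log_le_log h hS
      _ ≤ ((ε * (a - 1 / 2)) ^ 2 - (ε / 2) ^ 2) / 2 :=
          log_cosh_sub_log_cosh_le (by positivity) (by nlinarith)
      _ = (a - 1) * (ε ^ 2 / 2 * a) := by ring
  rw [renyiDiv, inv_mul_le_iff₀ (by linarith)]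
  exact hlog

theorem stmt_4_general {D Ω : Type*} (Neighbor : D → D → Prop)
    (hsymm : ∀ X X', Neighbor X X' → Neighbor X' X)
    (ε : ℝ) (hε : 0 ≤ ε) (M : D → Ω → ℝ)
    (hprob : ∀ X, (∀ y, 0 ≤ M X y) ∧ ∑' y, M X y = 1)
    (hDP : ∀ X X', Neighbor X X' → ∀ S : Set Ω,
      ∑' y : S, M X y ≤ Real.exp ε * ∑' y : S, M X' y) :
    zCDP Neighbor (ε^2/2) M := by
  have hpointwise : ∀ X X', Neighbor X X' → ∀ y, M X y ≤ exp ε * M X' y := fun X X' hN y => by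
    simpa only [tsum_singleton] using hDP X X' hN {y}
  intro X X' hN a ha
  obtain ⟨hp0, hp1⟩ := hprob X
  obtain ⟨hq0, hq1⟩ := hprob X'
  exact renyiDiv_le_of_le_exp_mul hε ha hp0 hq0 hp1 hq1 (hpointwise X X' hN)
    (hpointwise X' X (hsymm X X' hN))

/-- If a mechanism `M` satisfies pure `(ε,0)`-differential privacy, then it satisfies
`(ε²/2)`-zCDP. -/
theorem stmt_4 {D Ω : Type*} [Countable Ω] (Neighbor : D → D → Prop)
    (hsymm : ∀ X X', Neighbor X X' → Neighbor X' X)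
    (ε : ℝ) (hε : 0 ≤ ε) (M : D → Ω → ℝ)
    (hprob : ∀ X, (∀ y, 0 ≤ M X y) ∧ ∑' y, M X y = 1)
    (hDP : ∀ X X', Neighbor X X' → ∀ S : Set Ω,
      ∑' y : S, M X y ≤ Real.exp ε * ∑' y : S, M X' y) :
    zCDP Neighbor (ε^2/2) M :=
  stmt_4_general Neighbor hsymm ε hε M hprob hDP
end

section
/- The Gaussian mechanism satisfies zCDP: if f : X^n → R^d has ℓ₂-sensitivity Δ, then the mechanism M(X) = f(X) + Z, where Z ~ N(0, (Δ/√(2ρ))² · I), satisfies ρ-zCDP. -/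
/-!
The `α`-Rényi integrand of two Gaussians with common covariance is itself a Gaussian with
mean `α μ₁ + (1 - α) μ₂`, up to the constant factor `exp (α (α - 1) ‖μ₁ - μ₂‖² / (2σ²))`;
this comes from completing the square in `α ‖x - μ₁‖² + (1 - α) ‖x - μ₂‖²`. Since a Gaussian
density integrates to one, `D_α = α ‖μ₁ - μ₂‖² / (2σ²)`, and with `σ² = Δ² / (2ρ)` and
`‖μ₁ - μ₂‖ ≤ Δ` this is at most `ρ α`.
-/

open MeasureTheory

/-- The density of the spherical Gaussian `N(μ, σ²·I)` on `ℝ^d`. -/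
noncomputable def gaussDensity (d : ℕ) (μ : EuclideanSpace ℝ (Fin d)) (σ : ℝ)
    (x : EuclideanSpace ℝ (Fin d)) : ℝ :=
  ((Real.sqrt (2 * Real.pi * σ^2))⁻¹) ^ d * Real.exp (-‖x - μ‖^2 / (2 * σ^2))

/-- The `α`-Rényi divergence between two distributions on `ℝ^d` with densities `p, q`. -/
noncomputable def renyiDivDensity (d : ℕ) (a : ℝ) (p q : EuclideanSpace ℝ (Fin d) → ℝ) : ℝ :=
  (a - 1)⁻¹ * Real.log (∫ x, p x ^ a * q x ^ (1 - a))

open RealInnerProductSpace in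
theorem norm_sub_sq_add_norm_sub_sq_eq {E : Type*} [NormedAddCommGroup E]
    [InnerProductSpace ℝ E] (a : ℝ) (x μ₁ μ₂ : E) :
    a * ‖x - μ₁‖ ^ 2 + (1 - a) * ‖x - μ₂‖ ^ 2
      = ‖x - (a • μ₁ + (1 - a) • μ₂)‖ ^ 2 + a * (1 - a) * ‖μ₁ - μ₂‖ ^ 2 := by
  have hx : x - (a • μ₁ + (1 - a) • μ₂) = a • (x - μ₁) + (1 - a) • (x - μ₂) := by module
  have hμ : μ₁ - μ₂ = (x - μ₂) - (x - μ₁) := by abel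
  rw [hx, hμ, norm_add_sq_real, norm_sub_sq_real (x - μ₂), norm_smul, norm_smul,
    real_inner_smul_left, real_inner_smul_right, real_inner_comm (x - μ₁)]
  simp only [Real.norm_eq_abs, mul_pow, sq_abs]
  ring

theorem integral_gaussDensity (d : ℕ) (μ : EuclideanSpace ℝ (Fin d)) {σ : ℝ} (hσ : σ ≠ 0) :
    ∫ x, gaussDensity d μ σ x = 1 := by
  have ht : 0 < 2 * Real.pi * σ ^ 2 := by positivity
  have hb : 0 < (2 * σ ^ 2)⁻¹ := by positivity
  have hshift : ∫ x : EuclideanSpace ℝ (Fin d), Real.exp (-‖x - μ‖ ^ 2 / (2 * σ ^ 2))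
      = ∫ x : EuclideanSpace ℝ (Fin d), Real.exp (-(2 * σ ^ 2)⁻¹ * ‖x‖ ^ 2) := by
    rw [← integral_sub_right_eq_self (fun x => Real.exp (-(2 * σ ^ 2)⁻¹ * ‖x‖ ^ 2)) μ]
    simp only [neg_mul, mul_neg, div_eq_inv_mul]
  have hsqrt_pow : Real.sqrt (2 * Real.pi * σ ^ 2) ^ d = (2 * Real.pi * σ ^ 2) ^ (d / 2 : ℝ) := by
    rw [Real.sqrt_eq_rpow, ← Real.rpow_natCast, ← Real.rpow_mul ht.le, one_div_mul_eq_div]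
  simp only [gaussDensity]
  rw [integral_const_mul, hshift,
    GaussianFourier.integral_rexp_neg_mul_sq_norm hb, finrank_euclideanSpace_fin, inv_pow,
    hsqrt_pow, div_inv_eq_mul, ← mul_assoc, mul_comm Real.pi 2]
  exact inv_mul_cancel₀ (by positivity)

theorem gaussDensity_rpow_mul_gaussDensity_rpow (d : ℕ) (μ₁ μ₂ : EuclideanSpace ℝ (Fin d))
    (σ a : ℝ) (x : EuclideanSpace ℝ (Fin d)) :
    gaussDensity d μ₁ σ x ^ a * gaussDensity d μ₂ σ x ^ (1 - a)
      = gaussDensity d (a • μ₁ + (1 - a) • μ₂) σ x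
        * Real.exp (a * (a - 1) * ‖μ₁ - μ₂‖ ^ 2 / (2 * σ ^ 2)) := by
  set C := (Real.sqrt (2 * Real.pi * σ ^ 2))⁻¹ ^ d
  have hC : 0 ≤ C := by positivity
  have hconst : C ^ a * C ^ (1 - a) = C := by
    rw [← Real.rpow_add' hC (by norm_num), add_sub_cancel, Real.rpow_one]
  simp only [gaussDensity]
  rw [Real.mul_rpow hC (Real.exp_pos _).le, Real.mul_rpow hC (Real.exp_pos _).le,
    ← Real.exp_mul, ← Real.exp_mul, mul_mul_mul_comm, hconst, mul_assoc, ← Real.exp_add,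
    ← Real.exp_add]
  congr 2
  linear_combination (-(2 * σ ^ 2)⁻¹) * norm_sub_sq_add_norm_sub_sq_eq a x μ₁ μ₂

theorem renyiDivDensity_gaussDensity (d : ℕ) (μ₁ μ₂ : EuclideanSpace ℝ (Fin d)) {σ a : ℝ}
    (hσ : σ ≠ 0) (ha : a ≠ 1) :
    renyiDivDensity d a (gaussDensity d μ₁ σ) (gaussDensity d μ₂ σ)
      = a * ‖μ₁ - μ₂‖ ^ 2 / (2 * σ ^ 2) := by
  have ha' : a - 1 ≠ 0 := sub_ne_zero.mpr ha
  simp only [renyiDivDensity, gaussDensity_rpow_mul_gaussDensity_rpow, integral_mul_const,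
    integral_gaussDensity d _ hσ, one_mul, Real.log_exp]
  field_simp

/-- The Gaussian mechanism satisfies zCDP: if `f` has `ℓ₂`-sensitivity `Δ`, then releasing
`f(X) + N(0, (Δ/√(2ρ))²·I)` satisfies `ρ`-zCDP, i.e. the `α`-Rényi divergence between
the output distributions on neighboring datasets is at most `ρ·α` for all `α > 1`. -/
theorem stmt_5 {D : Type*} (Neighbor : D → D → Prop) (d : ℕ)
    (f : D → EuclideanSpace ℝ (Fin d)) (Δ ρ : ℝ) (hρ : 0 < ρ) (hΔ : 0 < Δ)
    (hsens : ∀ X X', Neighbor X X' → ‖f X - f X'‖ ≤ Δ) :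
    ∀ X X', Neighbor X X' → ∀ a : ℝ, 1 < a →
      renyiDivDensity d a (gaussDensity d (f X) (Δ / Real.sqrt (2 * ρ)))
        (gaussDensity d (f X') (Δ / Real.sqrt (2 * ρ))) ≤ ρ * a := by
  intro X X' hX a ha
  have hσ : Δ / Real.sqrt (2 * ρ) ≠ 0 := by positivity
  have hσ_sq : 2 * (Δ / Real.sqrt (2 * ρ)) ^ 2 = Δ ^ 2 / ρ := by
    rw [div_pow, Real.sq_sqrt (by positivity)]
    field_simp
  rw [renyiDivDensity_gaussDensity d _ _ hσ ha.ne', hσ_sq]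
  calc a * ‖f X - f X'‖ ^ 2 / (Δ ^ 2 / ρ) ≤ a * Δ ^ 2 / (Δ ^ 2 / ρ) := by
        gcongr
        exact hsens X X' hX
    _ = ρ * a := by field_simp
end

section
/- The fingerprinting lemma for Gaussians: for every function f : R^n → [−R, R], if μ is drawn uniformly from [−R, R] and X₁,…,X_n are drawn i.i.d. from N(μ, 1), then E[ (R² − μ²)·(f(X) − μ)·Σ_{i=1}^n (X_i − μ) + (f(X) − μ)² ] ≥ R²/3. -/
open MeasureTheory

/-!
Write the law of `X` under mean `μ` through its Lebesgue density `p_μ(x) = ∏ᵢ φ(xᵢ - μ)`, whose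
derivative in `μ` is `p_μ(x) · Σᵢ (xᵢ - μ)`. By Fubini the expectation becomes, for each fixed `x`,
an integral over `μ ∈ [-R, R]`; since the weight `R² - μ²` vanishes at `±R`, integrating by parts
turns the integrand into `p_μ(x) (f(x)² + R² - 2μ²)`. Swapping back, the inner expectation is at
least `R² - 2μ²`, and `∫_{-R}^{R} (R² - 2μ²) dμ = 2R³/3`.
-/

open ProbabilityTheory Real Set Function
open scoped ENNReal

namespace MeasureTheory

theorem lintegral_fin_nat_prod_eq_prod {n : ℕ} {E : Type*} [MeasurableSpace E]
    {μ : Fin n → Measure E} [∀ i, SigmaFinite (μ i)] {f : Fin n → E → ℝ≥0∞}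
    (hf : ∀ i, Measurable (f i)) :
    ∫⁻ x, ∏ i, f i (x i) ∂(Measure.pi μ) = ∏ i, ∫⁻ x, f i x ∂(μ i) := by
  induction n with
  | zero => simp
  | succ n ih =>
    rw [← ((measurePreserving_piFinSuccAbove μ 0).symm).lintegral_comp_emb
      (MeasurableEquiv.measurableEmbedding _)]
    simp_rw [MeasurableEquiv.piFinSuccAbove_symm_apply, Fin.insertNthEquiv,
      Fin.prod_univ_succ, Fin.insertNth_zero, Equiv.coe_fn_mk, Fin.cons_succ,
      Fin.zero_succAbove, cast_eq, Fin.cons_zero]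
    have hg : Measurable fun y : Fin n → E => ∏ i, f i.succ (y i) :=
      Finset.measurable_prod _ fun i _ => (hf i.succ).comp (measurable_pi_apply i)
    rw [lintegral_prod_mul (hf 0).aemeasurable hg.aemeasurable, ih fun i => hf i.succ]

theorem lintegral_fintype_prod_eq_prod {ι E : Type*} [Fintype ι] [MeasurableSpace E]
    {μ : ι → Measure E} [∀ i, SigmaFinite (μ i)] {f : ι → E → ℝ≥0∞}
    (hf : ∀ i, Measurable (f i)) :
    ∫⁻ x, ∏ i, f i (x i) ∂(Measure.pi μ) = ∏ i, ∫⁻ x, f i x ∂(μ i) := by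
  let e := (Fintype.equivFin ι).symm
  rw [← (measurePreserving_piCongrLeft _ e).lintegral_comp_emb
    (MeasurableEquiv.measurableEmbedding _)]
  simp_rw [← e.prod_comp, MeasurableEquiv.coe_piCongrLeft, Equiv.piCongrLeft_apply_apply]
  exact lintegral_fin_nat_prod_eq_prod fun i => hf _

theorem Measure.pi_withDensity {ι E : Type*} [Fintype ι] [MeasurableSpace E]
    {μ : ι → Measure E} [∀ i, SigmaFinite (μ i)] {d : ι → E → ℝ≥0∞} (hd : ∀ i, Measurable (d i))
    [∀ i, SigmaFinite ((μ i).withDensity (d i))] :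
    Measure.pi (fun i => (μ i).withDensity (d i))
      = (Measure.pi μ).withDensity fun x => ∏ i, d i (x i) := by
  refine Measure.pi_eq fun s hs => ?_
  rw [withDensity_apply _ (MeasurableSet.univ_pi hs), Measure.restrict_pi_pi,
    lintegral_fintype_prod_eq_prod hd]
  simp_rw [withDensity_apply _ (hs _)]

end MeasureTheory

section GaussianPi

variable {ι : Type*} [Fintype ι]

noncomputable def gaussianPDFRealPi (μ : ℝ) (x : ι → ℝ) : ℝ := ∏ i, gaussianPDFReal μ 1 (x i)

theorem gaussianPDFRealPi_nonneg (μ : ℝ) (x : ι → ℝ) : 0 ≤ gaussianPDFRealPi μ x :=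
  Finset.prod_nonneg fun _ _ => gaussianPDFReal_nonneg _ _ _

theorem gaussianPDFRealPi_eq (μ : ℝ) (x : ι → ℝ) :
    gaussianPDFRealPi μ x
      = (√(2 * π))⁻¹ ^ Fintype.card ι * exp (-(∑ i, (x i - μ) ^ 2) / 2) := by
  simp only [gaussianPDFRealPi, gaussianPDFReal, NNReal.coe_one, mul_one, Finset.prod_mul_distrib,
    Finset.prod_const, Finset.card_univ, ← exp_sum, neg_div, Finset.sum_div, Finset.sum_neg_distrib]

theorem continuous_gaussianPDFRealPi : Continuous (uncurry (gaussianPDFRealPi (ι := ι))) := by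
  simp only [uncurry_def, gaussianPDFRealPi_eq]
  fun_prop

theorem hasDerivAt_gaussianPDFRealPi (x : ι → ℝ) (μ : ℝ) :
    HasDerivAt (gaussianPDFRealPi · x) (gaussianPDFRealPi μ x * ∑ i, (x i - μ)) μ := by
  have hq : HasDerivAt (fun m => -(∑ i, (x i - m) ^ 2) / 2) (∑ i, (x i - μ)) μ := by
    refine ((HasDerivAt.fun_sum (u := Finset.univ) fun i _ =>
      ((hasDerivAt_id' μ).const_sub (x i)).fun_pow 2).fun_neg.div_const 2).congr_deriv ?_
    simp [Finset.sum_div]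
  simp only [gaussianPDFRealPi_eq]
  exact (hq.exp.const_mul _).congr_deriv (by ring)

theorem pi_gaussianReal_eq_withDensity (μ : ℝ) :
    Measure.pi (fun _ : ι => gaussianReal μ 1)
      = volume.withDensity fun x => ENNReal.ofReal (gaussianPDFRealPi μ x) := by
  have hμ : gaussianReal μ 1 = volume.withDensity (gaussianPDF μ 1) :=
    gaussianReal_of_var_ne_zero μ one_ne_zero
  have : SigmaFinite (volume.withDensity (gaussianPDF μ 1)) := hμ ▸ inferInstance
  simp_rw [hμ]
  rw [Measure.pi_withDensity fun _ => measurable_gaussianPDF μ 1, volume_pi]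
  simp_rw [gaussianPDFRealPi, ENNReal.ofReal_prod_of_nonneg fun _ _ => gaussianPDFReal_nonneg _ _ _]
  rfl

theorem integral_pi_gaussianReal (μ : ℝ) (g : (ι → ℝ) → ℝ) :
    ∫ x, g x ∂(Measure.pi fun _ : ι => gaussianReal μ 1) = ∫ x, gaussianPDFRealPi μ x * g x := by
  have hm : Measurable (gaussianPDFRealPi (ι := ι) μ) :=
    (continuous_gaussianPDFRealPi.uncurry_left μ).measurable
  rw [pi_gaussianReal_eq_withDensity, integral_withDensity_eq_integral_toReal_smul
    hm.ennreal_ofReal (ae_of_all _ fun _ => ENNReal.ofReal_lt_top)]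
  simp_rw [ENNReal.toReal_ofReal (gaussianPDFRealPi_nonneg _ _), smul_eq_mul]

theorem integrable_pi_gaussianReal_iff (μ : ℝ) {g : (ι → ℝ) → ℝ} :
    Integrable g (Measure.pi fun _ : ι => gaussianReal μ 1)
      ↔ Integrable fun x => gaussianPDFRealPi μ x * g x := by
  have hm : Measurable (gaussianPDFRealPi (ι := ι) μ) :=
    (continuous_gaussianPDFRealPi.uncurry_left μ).measurable
  rw [pi_gaussianReal_eq_withDensity, integrable_withDensity_iff_integrable_smul'
    hm.ennreal_ofReal (ae_of_all _ fun _ => ENNReal.ofReal_lt_top)]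
  simp_rw [ENNReal.toReal_ofReal (gaussianPDFRealPi_nonneg _ _), smul_eq_mul]

theorem measurePreserving_eval_sub_pi_gaussianReal (μ : ℝ) (j : ι) :
    MeasurePreserving (fun x : ι → ℝ => x j - μ)
      (Measure.pi fun _ => gaussianReal μ 1) (gaussianReal 0 1) :=
  (MeasurePreserving.mk (measurable_sub_const μ)
    ((gaussianReal_map_sub_const μ).trans (by rw [sub_self]))).comp
    (measurePreserving_eval (fun _ : ι => gaussianReal μ 1) j)

theorem integrable_abs_eval_sub_pi_gaussianReal (μ : ℝ) (j : ι) :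
    Integrable (fun x : ι → ℝ => |x j - μ|) (Measure.pi fun _ => gaussianReal μ 1) :=
  (measurePreserving_eval_sub_pi_gaussianReal μ j).integrable_comp_of_integrable
    (g := fun t => |t|) IsGaussian.integrable_id.abs

theorem integral_abs_eval_sub_pi_gaussianReal (μ : ℝ) (j : ι) :
    ∫ x, |x j - μ| ∂(Measure.pi fun _ : ι => gaussianReal μ 1) = ∫ t, |t| ∂gaussianReal 0 1 := by
  have h := measurePreserving_eval_sub_pi_gaussianReal μ j
  rw [← h.map_eq, integral_map h.measurable.aemeasurable (by fun_prop)]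

theorem integral_sum_abs_eval_sub_pi_gaussianReal (μ : ℝ) :
    ∫ x, ∑ j, |x j - μ| ∂(Measure.pi fun _ : ι => gaussianReal μ 1)
      = Fintype.card ι * ∫ t, |t| ∂gaussianReal 0 1 := by
  simp [integral_finsetSum _ fun j _ => integrable_abs_eval_sub_pi_gaussianReal μ j,
    integral_abs_eval_sub_pi_gaussianReal]

theorem integrable_gaussianPDFRealPi_mul {ν : Measure ℝ} [IsFiniteMeasure ν]
    {F : ℝ → (ι → ℝ) → ℝ} (hF : Measurable (uncurry F)) {a b : ℝ}
    (hFb : ∀ᵐ μ ∂ν, ∀ x, |F μ x| ≤ a * ∑ j, |x j - μ| + b) :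
    Integrable (uncurry fun μ x => gaussianPDFRealPi μ x * F μ x) (ν.prod volume) := by
  have hmeas : Measurable (uncurry fun μ x => gaussianPDFRealPi μ x * F μ x) :=
    continuous_gaussianPDFRealPi.measurable.mul hF
  have hsum (μ : ℝ) : Integrable (fun x : ι → ℝ => ∑ j, |x j - μ|)
      (Measure.pi fun _ => gaussianReal μ 1) :=
    integrable_finsetSum _ fun j _ => integrable_abs_eval_sub_pi_gaussianReal μ j
  have hdom (μ : ℝ) : Integrable (fun x : ι → ℝ => a * ∑ j, |x j - μ| + b)
      (Measure.pi fun _ => gaussianReal μ 1) :=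
    ((hsum μ).const_mul a).add (integrable_const b)
  have hFμ {μ : ℝ} (hμ : ∀ x, |F μ x| ≤ a * ∑ j, |x j - μ| + b) :
      Integrable (F μ) (Measure.pi fun _ => gaussianReal μ 1) :=
    (hdom μ).mono' (hF.comp measurable_prodMk_left).aestronglyMeasurable (ae_of_all _ hμ)
  refine (integrable_prod_iff hmeas.aestronglyMeasurable).2 ⟨?_, ?_⟩
  · filter_upwards [hFb] with μ hμ
    exact (integrable_pi_gaussianReal_iff μ).1 (hFμ hμ)
  · refine (integrable_const (a * (Fintype.card ι * ∫ t, |t| ∂gaussianReal 0 1) + b)).mono'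
      hmeas.aestronglyMeasurable.norm.integral_prod_right' ?_
    filter_upwards [hFb] with μ hμ
    calc ‖∫ x, ‖gaussianPDFRealPi μ x * F μ x‖‖
        = ∫ x, |F μ x| ∂(Measure.pi fun _ => gaussianReal μ 1) := by
          rw [integral_pi_gaussianReal,
            Real.norm_of_nonneg (integral_nonneg fun _ => norm_nonneg _)]
          simp_rw [norm_mul, Real.norm_eq_abs, abs_of_nonneg (gaussianPDFRealPi_nonneg _ _)]
      _ ≤ ∫ x, (a * ∑ j, |x j - μ| + b) ∂(Measure.pi fun _ => gaussianReal μ 1) :=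
          integral_mono (hFμ hμ).abs (hdom μ) hμ
      _ = a * (Fintype.card ι * ∫ t, |t| ∂gaussianReal 0 1) + b := by
          rw [integral_add ((hsum μ).const_mul a) (integrable_const b), integral_const_mul,
            integral_sum_abs_eval_sub_pi_gaussianReal]
          simp

end GaussianPi

theorem integral_fingerprint_by_parts {p p' : ℝ → ℝ} (hp : ∀ m, HasDerivAt p (p' m) m)
    (hp' : Continuous p') (R c : ℝ) :
    ∫ m in -R..R, ((R ^ 2 - m ^ 2) * (c - m) * p' m + (c - m) ^ 2 * p m)
      = ∫ m in -R..R, (c ^ 2 + (R ^ 2 - 2 * m ^ 2)) * p m := by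
  have hpc : Continuous p := continuous_iff_continuousAt.2 fun m => (hp m).continuousAt
  have hu (m : ℝ) : HasDerivAt (fun m => (R ^ 2 - m ^ 2) * (c - m))
      (-(2 * m * (c - m)) + (m ^ 2 - R ^ 2)) m := by
    simpa using ((hasDerivAt_pow 2 m).const_sub (R ^ 2)).fun_mul ((hasDerivAt_id m).const_sub c)
  have hparts := intervalIntegral.integral_mul_deriv_eq_deriv_mul (a := -R) (b := R)
    (fun m _ => hu m) (fun m _ => hp m) (Continuous.intervalIntegrable (by fun_prop) _ _)
    (hp'.intervalIntegrable _ _)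
  rw [intervalIntegral.integral_add (Continuous.intervalIntegrable (by fun_prop) _ _)
    (Continuous.intervalIntegrable (by fun_prop) _ _), hparts]
  simp only [neg_sq, sub_self, zero_mul, zero_sub, neg_add_eq_sub]
  rw [← intervalIntegral.integral_sub (Continuous.intervalIntegrable (by fun_prop) _ _)
    (Continuous.intervalIntegrable (by fun_prop) _ _)]
  congr 1
  ext m
  ring

theorem setIntegral_gaussianPDFRealPi_fingerprint {ι : Type*} [Fintype ι] (x : ι → ℝ) {R : ℝ}
    (hR : 0 ≤ R) (c : ℝ) :
    ∫ μ in Icc (-R) R,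
        gaussianPDFRealPi μ x * ((R ^ 2 - μ ^ 2) * (c - μ) * ∑ i, (x i - μ) + (c - μ) ^ 2)
      = ∫ μ in Icc (-R) R, gaussianPDFRealPi μ x * (c ^ 2 + (R ^ 2 - 2 * μ ^ 2)) := by
  have h := integral_fingerprint_by_parts (hasDerivAt_gaussianPDFRealPi x)
    ((continuous_gaussianPDFRealPi.uncurry_right x).mul (by fun_prop)) R c
  simp only [integral_Icc_eq_integral_Ioc, ← intervalIntegral.integral_of_le (neg_le_self hR)]
  convert h using 1 <;> congr 1 <;> ext μ <;> ring

theorem abs_fingerprint_le {R μ c s : ℝ} (hμ : μ ∈ Icc (-R) R) (hc : c ∈ Icc (-R) R) :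
    |(R ^ 2 - μ ^ 2) * (c - μ) * s + (c - μ) ^ 2| ≤ 2 * R ^ 3 * |s| + 4 * R ^ 2 := by
  obtain ⟨hμl, hμr⟩ := hμ
  obtain ⟨hcl, hcr⟩ := hc
  have h1 : |R ^ 2 - μ ^ 2| ≤ R ^ 2 := abs_le.2 ⟨by nlinarith, by nlinarith⟩
  have h2 : |c - μ| ≤ 2 * R := abs_le.2 ⟨by linarith, by linarith⟩
  calc |(R ^ 2 - μ ^ 2) * (c - μ) * s + (c - μ) ^ 2|
      ≤ |R ^ 2 - μ ^ 2| * |c - μ| * |s| + |c - μ| ^ 2 := by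
        rw [← abs_pow, ← abs_mul, ← abs_mul]
        exact abs_add_le _ _
    _ ≤ R ^ 2 * (2 * R) * |s| + (2 * R) ^ 2 := by gcongr
    _ = 2 * R ^ 3 * |s| + 4 * R ^ 2 := by ring

section Fingerprint

variable {ι : Type*} [Fintype ι] {R : ℝ} {f : (ι → ℝ) → ℝ}

theorem integrable_gaussianPDFRealPi_mul_fingerprint (hf : ∀ x, f x ∈ Icc (-R) R)
    (hmeas : Measurable f) :
    Integrable (uncurry fun μ x => gaussianPDFRealPi μ x *
        ((R ^ 2 - μ ^ 2) * (f x - μ) * ∑ i, (x i - μ) + (f x - μ) ^ 2))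
      ((volume.restrict (Icc (-R) R)).prod volume) := by
  refine integrable_gaussianPDFRealPi_mul (a := 2 * R ^ 3) (b := 4 * R ^ 2) (by fun_prop) ?_
  filter_upwards [ae_restrict_mem measurableSet_Icc] with μ hμ x
  have hR : 0 ≤ R := neg_le_self_iff.1 (hμ.1.trans hμ.2)
  grw [abs_fingerprint_le hμ (hf x), Finset.abs_sum_le_sum_abs]

theorem integrable_gaussianPDFRealPi_mul_sq_add (hf : ∀ x, f x ∈ Icc (-R) R)
    (hmeas : Measurable f) :
    Integrable (uncurry fun μ x => gaussianPDFRealPi μ x * (f x ^ 2 + (R ^ 2 - 2 * μ ^ 2)))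
      ((volume.restrict (Icc (-R) R)).prod volume) := by
  refine integrable_gaussianPDFRealPi_mul (a := 0) (b := 2 * R ^ 2) (by fun_prop) ?_
  filter_upwards [ae_restrict_mem measurableSet_Icc] with μ ⟨hμl, hμr⟩ x
  obtain ⟨hfl, hfr⟩ := hf x
  rw [zero_mul, zero_add, abs_le]
  constructor <;> nlinarith

theorem setIntegral_integral_fingerprint_eq (hR : 0 ≤ R) (hf : ∀ x, f x ∈ Icc (-R) R)
    (hmeas : Measurable f) :
    ∫ μ in Icc (-R) R, ∫ x, (R ^ 2 - μ ^ 2) * (f x - μ) * ∑ i, (x i - μ) + (f x - μ) ^ 2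
        ∂(Measure.pi fun _ : ι => gaussianReal μ 1)
      = ∫ μ in Icc (-R) R, ∫ x, f x ^ 2 + (R ^ 2 - 2 * μ ^ 2)
        ∂(Measure.pi fun _ : ι => gaussianReal μ 1) := by
  simp_rw [integral_pi_gaussianReal]
  rw [integral_integral_swap (integrable_gaussianPDFRealPi_mul_fingerprint hf hmeas),
    integral_integral_swap (integrable_gaussianPDFRealPi_mul_sq_add hf hmeas)]
  simp_rw [setIntegral_gaussianPDFRealPi_fingerprint _ hR]

theorem integrableOn_integral_sq_add (hf : ∀ x, f x ∈ Icc (-R) R) (hmeas : Measurable f) :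
    IntegrableOn (fun μ => ∫ x, f x ^ 2 + (R ^ 2 - 2 * μ ^ 2)
      ∂(Measure.pi fun _ : ι => gaussianReal μ 1)) (Icc (-R) R) := by
  simpa only [IntegrableOn, integral_pi_gaussianReal, uncurry_apply_pair]
    using (integrable_gaussianPDFRealPi_mul_sq_add hf hmeas).integral_prod_left

end Fingerprint

theorem le_integral_sq_add {Ω : Type*} [MeasurableSpace Ω] {P : Measure Ω}
    [IsProbabilityMeasure P] {g : Ω → ℝ} (hg : Integrable (fun x => g x ^ 2) P) (c : ℝ) :
    c ≤ ∫ x, g x ^ 2 + c ∂P := by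
  rw [integral_add hg (integrable_const c), integral_const, probReal_univ, one_smul]
  exact le_add_of_nonneg_left (integral_nonneg fun _ => sq_nonneg _)

theorem setIntegral_Icc_sq_sub_two_mul_sq {R : ℝ} (hR : 0 ≤ R) :
    ∫ μ in Icc (-R) R, (R ^ 2 - 2 * μ ^ 2) = 2 * R ^ 3 / 3 := by
  rw [integral_Icc_eq_integral_Ioc, ← intervalIntegral.integral_of_le (neg_le_self hR),
    intervalIntegral.integral_sub intervalIntegrable_const
      (Continuous.intervalIntegrable (by fun_prop) _ _),
    intervalIntegral.integral_const_mul, integral_pow]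
  simp only [intervalIntegral.integral_const, sub_neg_eq_add, smul_eq_mul]
  ring

/-- Fingerprinting lemma for Gaussians: for any `f : ℝⁿ → [−R, R]`, with `μ` uniform on
`[−R,R]` and `X₁,…,Xₙ` i.i.d. `N(μ,1)`,
`E[ (R² − μ²)·(f(X) − μ)·Σᵢ(Xᵢ − μ) + (f(X) − μ)² ] ≥ R²/3`.
The expectation over `μ` is written as an integral against the uniform density `1/(2R)`
on `[−R,R]`, and the expectation over `X` against the product Gaussian measure. -/
theorem stmt_8 (n : ℕ) (R : ℝ) (hR : 0 < R) (f : (Fin n → ℝ) → ℝ)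
    (hf : ∀ x, f x ∈ Set.Icc (-R) R) (hmeas : Measurable f) :
    (1 / (2 * R)) * ∫ μ in Set.Icc (-R) R,
      ∫ x : Fin n → ℝ,
        ((R^2 - μ^2) * (f x - μ) * (∑ i, (x i - μ)) + (f x - μ)^2)
        ∂(Measure.pi fun _ : Fin n => ProbabilityTheory.gaussianReal μ 1)
      ≥ R^2 / 3 := by
  have hf2 (μ : ℝ) :
      Integrable (fun x => f x ^ 2) (Measure.pi fun _ : Fin n => gaussianReal μ 1) :=
    .of_bound (hmeas.pow_const 2).aestronglyMeasurable (R ^ 2) (ae_of_all _ fun x => by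
      obtain ⟨hfl, hfr⟩ := hf x
      rw [Real.norm_eq_abs, abs_le]
      constructor <;> nlinarith)
  rw [ge_iff_le, setIntegral_integral_fingerprint_eq hR.le hf hmeas]
  calc R ^ 2 / 3 = 1 / (2 * R) * ∫ μ in Icc (-R) R, (R ^ 2 - 2 * μ ^ 2) := by
        rw [setIntegral_Icc_sq_sub_two_mul_sq hR.le]
        field_simp
    _ ≤ _ := mul_le_mul_of_nonneg_left (integral_mono (Continuous.integrableOn_Icc (by fun_prop))
        (integrableOn_integral_sq_add hf hmeas) fun μ => le_integral_sq_add (hf2 μ) _)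
        (by positivity)
end

section
/- Group privacy / sampling amplification lemma: let M : R^{n×d} → A be an ε-differentially private mechanism, and let D, D' be probability distributions on R^d with total variation distance α. Then for every measurable S ⊆ A, Pr_{X ~ D^n}[M(X) ∈ S] ≤ exp(O(εαn)) · Pr_{X' ~ (D')^n}[M(X') ∈ S], where the constant in the O is universal (a factor of at most 2 in the exponent suffices for ε ≤ 1). -/
/-!
Replacing one coordinate of the product measure by its counterpart costs at most a factor
`1 + α (e^ε - 1)`: as a function of that coordinate the integrand takes values in `[c, e^ε c]`
with `c` its infimum, so by the layer cake formula passing between two measures at total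
variation distance `α` moves the integral of its excess over `c` by at most `α (e^ε - 1) c`,
which is at most `α (e^ε - 1)` times the integral itself. Swapping the `n` coordinates one at
a time and using `e^ε - 1 ≤ 2ε` for `ε ≤ 1` gives `(1 + α (e^ε - 1))^n ≤ exp (2εαn)`.
-/

open MeasureTheory ProbabilityTheory

open scoped ENNReal

section Comparison

variable {Ω : Type*} [MeasurableSpace Ω] {μ ν : Measure Ω} {a : ℝ≥0∞}

lemma lintegral_le_lintegral_add_mul_of_le_add {h : Ω → ℝ≥0∞} (hh : Measurable h) {B : ℝ≥0∞}
    (hB : B ≠ ∞) (hhB : ∀ x, h x ≤ B) (hle : ∀ S, MeasurableSet S → μ S ≤ ν S + a) :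
    ∫⁻ x, h x ∂μ ≤ ∫⁻ x, h x ∂ν + a * B := by
  set f : Ω → ℝ := fun x => (h x).toReal
  have hf : Measurable f := hh.ennreal_toReal
  have layer_cake (ρ : Measure Ω) : ∫⁻ x, h x ∂ρ = ∫⁻ t in Set.Ioi 0, ρ {x | t < f x} := by
    rw [← lintegral_eq_lintegral_meas_lt ρ (ae_of_all _ fun _ => ENNReal.toReal_nonneg)
      hf.aemeasurable]
    exact lintegral_congr fun x => (ENNReal.ofReal_toReal (ne_top_of_le_ne_top hB (hhB x))).symm
  have level_sets (t : ℝ) :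
      μ {x | t < f x} ≤ ν {x | t < f x} + (Set.Iic B.toReal).indicator (fun _ => a) t := by
    by_cases ht : t ≤ B.toReal
    · simpa [Set.indicator_of_mem (Set.mem_Iic.2 ht)] using
        hle _ (measurableSet_lt measurable_const hf)
    · have : {x | t < f x} = ∅ := Set.eq_empty_of_forall_notMem fun x hx =>
        ht (le_of_lt (lt_of_lt_of_le hx (ENNReal.toReal_mono hB (hhB x))))
      simp [this]
  calc ∫⁻ x, h x ∂μ = ∫⁻ t in Set.Ioi 0, μ {x | t < f x} := layer_cake μ
    _ ≤ ∫⁻ t in Set.Ioi 0,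
          (ν {x | t < f x} + (Set.Iic B.toReal).indicator (fun _ => a) t) :=
        lintegral_mono level_sets
    _ = ∫⁻ x, h x ∂ν + a * B := by
      rw [lintegral_add_right _ (measurable_const.indicator measurableSet_Iic),
        lintegral_indicator_const measurableSet_Iic, Measure.restrict_apply measurableSet_Iic,
        Set.Iic_inter_Ioi, Real.volume_Ioc, sub_zero, ENNReal.ofReal_toReal hB, ← layer_cake]

lemma lintegral_le_one_add_mul_of_le_mul [IsProbabilityMeasure μ] [IsProbabilityMeasure ν]
    {g : Ω → ℝ≥0∞} (hg : Measurable g) (hg1 : ∀ x, g x ≤ 1) {E : ℝ≥0∞} (hE : E ≠ ∞)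
    (hgE : ∀ x y, g x ≤ E * g y) (hle : ∀ S, MeasurableSet S → μ S ≤ ν S + a) :
    ∫⁻ x, g x ∂μ ≤ (1 + a * (E - 1)) * ∫⁻ x, g x ∂ν := by
  have := nonempty_of_isProbabilityMeasure μ
  set c := ⨅ y, g y
  have hc (x : Ω) : c ≤ g x := iInf_le g x
  have hc_top : c ≠ ∞ :=
    ne_top_of_le_ne_top ENNReal.one_ne_top ((hc (Classical.arbitrary Ω)).trans (hg1 _))
  have hgc (x : Ω) : g x - c ≤ (E - 1) * c := by
    have : g x ≤ E * c := by
      rw [ENNReal.mul_iInf (by simp [hE])]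
      exact le_iInf (hgE x)
    rw [ENNReal.sub_mul (fun _ _ => hc_top), one_mul]
    exact tsub_le_tsub_right this c
  have split (ρ : Measure Ω) [IsProbabilityMeasure ρ] :
      ∫⁻ x, g x ∂ρ = ∫⁻ x, (g x - c) ∂ρ + c := by
    rw [← lintegral_congr fun x => tsub_add_cancel_of_le (hc x),
      lintegral_add_right _ measurable_const, lintegral_const, measure_univ, mul_one]
  have hc_le : c ≤ ∫⁻ x, g x ∂ν := by
    simpa using lintegral_mono (μ := ν) hc
  calc ∫⁻ x, g x ∂μ = ∫⁻ x, (g x - c) ∂μ + c := split μ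
    _ ≤ ∫⁻ x, (g x - c) ∂ν + a * ((E - 1) * c) + c := by
      gcongr
      exact lintegral_le_lintegral_add_mul_of_le_add (hg.sub measurable_const)
        (by finiteness) hgc hle
    _ = ∫⁻ x, g x ∂ν + a * (E - 1) * c := by rw [split ν]; ring
    _ ≤ ∫⁻ x, g x ∂ν + a * (E - 1) * ∫⁻ x, g x ∂ν := by gcongr
    _ = (1 + a * (E - 1)) * ∫⁻ x, g x ∂ν := by ring

end Comparison

section Product

variable {n : ℕ} {β : Type*} [MeasurableSpace β] {a E : ℝ≥0∞}

lemma lintegral_pi_eq_lintegral_lintegral_insertNth (ρ : Fin (n + 1) → Measure β)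
    [∀ i, SigmaFinite (ρ i)] (i : Fin (n + 1)) {f : (Fin (n + 1) → β) → ℝ≥0∞}
    (hf : Measurable f) :
    ∫⁻ X, f X ∂(Measure.pi ρ) =
      ∫⁻ y, ∫⁻ x, f (i.insertNth x y) ∂(ρ i) ∂(Measure.pi fun j => ρ (i.succAbove j)) := by
  set e := MeasurableEquiv.piFinSuccAbove (fun _ => β) i
  rw [← ((measurePreserving_piFinSuccAbove ρ i).symm e).lintegral_comp_emb
    e.symm.measurableEmbedding]
  exact lintegral_prod_symm _ (hf.comp e.symm.measurable).aemeasurable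

lemma lintegral_pi_le_one_add_mul_of_forall_ne_eq {μ ν : Fin n → Measure β}
    [∀ i, IsProbabilityMeasure (μ i)] [∀ i, IsProbabilityMeasure (ν i)]
    {f : (Fin n → β) → ℝ≥0∞} (hf : Measurable f) (hf1 : ∀ X, f X ≤ 1) (hE : E ≠ ∞) (i : Fin n)
    (hfE : ∀ X X' : Fin n → β, (∀ j, j ≠ i → X j = X' j) → f X ≤ E * f X')
    (hoff : ∀ j, j ≠ i → μ j = ν j) (hi : ∀ S, MeasurableSet S → μ i S ≤ ν i S + a) :
    ∫⁻ X, f X ∂(Measure.pi μ) ≤ (1 + a * (E - 1)) * ∫⁻ X, f X ∂(Measure.pi ν) := by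
  cases n with
  | zero => exact i.elim0
  | succ m =>
    have hF : Measurable fun p : β × (Fin m → β) => f (i.insertNth p.1 p.2) :=
      hf.comp (MeasurableEquiv.piFinSuccAbove (fun _ => β) i).symm.measurable
    have hrest : (fun j => μ (i.succAbove j)) = fun j => ν (i.succAbove j) :=
      funext fun j => hoff _ (Fin.succAbove_ne i j)
    have hslice (y : Fin m → β) :
        ∫⁻ x, f (i.insertNth x y) ∂(μ i) ≤
          (1 + a * (E - 1)) * ∫⁻ x, f (i.insertNth x y) ∂(ν i) := by
      refine lintegral_le_one_add_mul_of_le_mul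
        (hF.comp measurable_prodMk_right) (fun _ => hf1 _) hE (fun x x' => hfE _ _ ?_) hi
      intro j hj
      obtain ⟨k, rfl⟩ := Fin.exists_succAbove_eq hj
      simp only [Fin.insertNth_apply_succAbove]
    rw [lintegral_pi_eq_lintegral_lintegral_insertNth μ i hf,
      lintegral_pi_eq_lintegral_lintegral_insertNth ν i hf, hrest,
      ← lintegral_const_mul _ hF.lintegral_prod_left']
    exact lintegral_mono hslice

lemma lintegral_pi_le_pow_mul {μ ν : Fin n → Measure β}
    [∀ i, IsProbabilityMeasure (μ i)] [∀ i, IsProbabilityMeasure (ν i)]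
    {f : (Fin n → β) → ℝ≥0∞} (hf : Measurable f) (hf1 : ∀ X, f X ≤ 1) (hE : E ≠ ∞)
    (hfE : ∀ X X' : Fin n → β, (∃ i, ∀ j, j ≠ i → X j = X' j) → f X ≤ E * f X')
    (hle : ∀ i S, MeasurableSet S → μ i S ≤ ν i S + a) :
    ∫⁻ X, f X ∂(Measure.pi μ) ≤ (1 + a * (E - 1)) ^ n * ∫⁻ X, f X ∂(Measure.pi ν) := by
  let hybrid (k : ℕ) (i : Fin n) : Measure β := if (i : ℕ) < k then μ i else ν i
  have (k : ℕ) (i : Fin n) : IsProbabilityMeasure (hybrid k i) := by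
    dsimp only [hybrid]; split_ifs <;> infer_instance
  have hchain (k : ℕ) (hk : k ≤ n) :
      ∫⁻ X, f X ∂(Measure.pi (hybrid k)) ≤
        (1 + a * (E - 1)) ^ k * ∫⁻ X, f X ∂(Measure.pi ν) := by
    induction k with
    | zero => simp [hybrid]
    | succ k ih =>
      calc ∫⁻ X, f X ∂(Measure.pi (hybrid (k + 1)))
          ≤ (1 + a * (E - 1)) * ∫⁻ X, f X ∂(Measure.pi (hybrid k)) := by
            refine lintegral_pi_le_one_add_mul_of_forall_ne_eq hf hf1 hE ⟨k, hk⟩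
              (fun X X' h => hfE X X' ⟨_, h⟩) (fun j hj => ?_) ?_
            · have : (j : ℕ) ≠ k := fun h => hj (Fin.ext h)
              simp only [hybrid]
              split_ifs <;> first | rfl | omega
            · simpa [hybrid] using hle ⟨k, hk⟩
        _ ≤ (1 + a * (E - 1)) * ((1 + a * (E - 1)) ^ k * ∫⁻ X, f X ∂(Measure.pi ν)) := by
            gcongr; exact ih (by omega)
        _ = (1 + a * (E - 1)) ^ (k + 1) * ∫⁻ X, f X ∂(Measure.pi ν) := by ring
  simpa [hybrid] using hchain n le_rfl

end Product

lemma one_add_mul_exp_sub_one_le_exp {ε α : ℝ} (hε0 : 0 ≤ ε) (hε1 : ε ≤ 1) (hα : 0 ≤ α) :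
    1 + α * (Real.exp ε - 1) ≤ Real.exp (2 * ε * α) := by
  have hexp : Real.exp ε - 1 ≤ 2 * ε := by
    simpa [abs_of_nonneg hε0, abs_of_nonneg (sub_nonneg.2 (Real.one_le_exp hε0))] using
      Real.abs_exp_sub_one_le (x := ε) (by rwa [abs_of_nonneg hε0])
  calc 1 + α * (Real.exp ε - 1) ≤ 2 * ε * α + 1 := by nlinarith
    _ ≤ Real.exp (2 * ε * α) := Real.add_one_le_exp _

lemma ENNReal.le_add_ofReal_of_abs_toReal_sub_le {x y : ℝ≥0∞} (hx : x ≠ ∞) {α : ℝ}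
    (h : |x.toReal - y.toReal| ≤ α) : x ≤ y + ENNReal.ofReal α :=
  calc x = ENNReal.ofReal x.toReal := (ENNReal.ofReal_toReal hx).symm
    _ ≤ ENNReal.ofReal (y.toReal + α) :=
      ENNReal.ofReal_le_ofReal (by linarith [le_abs_self (x.toReal - y.toReal)])
    _ ≤ ENNReal.ofReal y.toReal + ENNReal.ofReal α := ENNReal.ofReal_add_le
    _ ≤ y + ENNReal.ofReal α := by gcongr; exact ENNReal.ofReal_toReal_le

/-- Group privacy / sampling amplification: if `M` is an `ε`-DP mechanism (`ε ≤ 1`)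
and `D, D'` are distributions on `ℝ^d` at total variation distance at most `α`, then
for every measurable event `S`,
`Pr_{X ~ Dⁿ}[M(X) ∈ S] ≤ exp(2εαn) · Pr_{X' ~ (D')ⁿ}[M(X') ∈ S]`. -/
theorem stmt_11 {d : ℕ} {A : Type*} [MeasurableSpace A]
    (n : ℕ) (M : Kernel (Fin n → (Fin d → ℝ)) A) [IsMarkovKernel M]
    (ε : ℝ) (hε0 : 0 ≤ ε) (hε1 : ε ≤ 1)
    (hDP : ∀ (X X' : Fin n → (Fin d → ℝ)), (∃ i, ∀ j, j ≠ i → X j = X' j) →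
      ∀ S : Set A, MeasurableSet S → M X S ≤ ENNReal.ofReal (Real.exp ε) * M X' S)
    (D D' : Measure (Fin d → ℝ)) [IsProbabilityMeasure D] [IsProbabilityMeasure D']
    (α : ℝ)
    (hα : ∀ S : Set (Fin d → ℝ), MeasurableSet S → |(D S).toReal - (D' S).toReal| ≤ α) :
    ∀ S : Set A, MeasurableSet S →
      ∫⁻ X, M X S ∂(Measure.pi fun _ : Fin n => D)
        ≤ ENNReal.ofReal (Real.exp (2 * ε * α * n)) *
            ∫⁻ X, M X S ∂(Measure.pi fun _ : Fin n => D') := by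
  intro S hS
  have hα0 : 0 ≤ α := (abs_nonneg _).trans (hα ∅ MeasurableSet.empty)
  have hK : (1 + ENNReal.ofReal α * (ENNReal.ofReal (Real.exp ε) - 1)) ^ n ≤
      ENNReal.ofReal (Real.exp (2 * ε * α * n)) := by
    have hpos : 0 ≤ Real.exp ε - 1 := sub_nonneg.2 (Real.one_le_exp hε0)
    rw [← ENNReal.ofReal_one, ← ENNReal.ofReal_sub _ zero_le_one, ← ENNReal.ofReal_mul hα0,
      ← ENNReal.ofReal_add zero_le_one (by positivity), ← ENNReal.ofReal_pow (by positivity),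
      mul_comm _ (n : ℝ), Real.exp_nat_mul]
    exact ENNReal.ofReal_le_ofReal (pow_le_pow_left₀ (by positivity)
      (one_add_mul_exp_sub_one_le_exp hε0 hε1 hα0) n)
  calc ∫⁻ X, M X S ∂(Measure.pi fun _ : Fin n => D)
      ≤ (1 + ENNReal.ofReal α * (ENNReal.ofReal (Real.exp ε) - 1)) ^ n *
          ∫⁻ X, M X S ∂(Measure.pi fun _ : Fin n => D') :=
        lintegral_pi_le_pow_mul (M.measurable_coe hS) (fun _ => prob_le_one)
          ENNReal.ofReal_ne_top (fun X X' h => hDP X X' h S hS)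
          fun _ T hT => ENNReal.le_add_ofReal_of_abs_toReal_sub_le (measure_ne_top D T) (hα T hT)
    _ ≤ _ := by gcongr
end
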